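/- Let (X,d,μ) be a space of homogeneous type with quasi-triangle constant A₀ and upper dimension ω, and fix γ > 0, η > 0. There is a constant C, depending only on γ, η, A₀, the doubling constant and ω, with the following property. Let 0 < r ≤ s, x₁, x₂ ∈ X, and let u, v : X → ℝ be integrable functions such that: ∫_X u dμ = 0; |u(x)| ≤ (V_r(x₁) + V(x₁,x))^(−1) (r/(r + d(x₁,x)))^(γ+η) for all x; |v(x)| ≤ (V_s(x₂) + V(x₂,x))^(−1) (s/(s + d(x₂,x)))^(γ+η) for all x; and |v(x) − v(x′)| ≤ (d(x,x′)/(s + d(x₂,x)))^η (V_s(x₂) + V(x₂,x))^(−1) (s/(s + d(x₂,x)))^(γ+η) whenever d(x,x′) ≤ (2A₀)^(−1)(s + d(x₂,x)). Then |∫_X u(x) v(x) dμ(x)| ≤ C (r/s)^η · (V_s(x₁) + V_s(x₂) + V(x₁,x₂))^(−1) · (s/(s + d(x₁,x₂)))^γ. -/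

import Mathlib

open MeasureTheory Real
open scoped ENNReal

/-!
Since `∫ u = 0`, the pairing equals `∫ u (v - v x₁)`. Where `d(x₁,x) ≤ (s + d(x₁,x₂))/(2A₀)`
the Hölder regularity of `v` at `x₁` supplies the factor `(r/s)^η`, and what remains is a
bump of order `γ` at `x₁`; farther out, `u` is already pointwise of the size of the right-hand
side, and is paired against `|v|`. Every volume that appears is compared with
`V_s(x₁) + V_s(x₂) + V(x₁,x₂)` through balls of radius comparable to `s + d(x₁,x₂)`, using the
quasi-triangle inequality and the upper dimension, and a bump of order `α > 0` has `L¹` norm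
bounded independently of its centre and scale by summing over dyadic balls with doubling.
-/

/-- A space of homogeneous type in the sense of Coifman and Weiss:
a quasi-metric `d` with quasi-triangle constant `A0`, and a doubling
Borel measure `μ` with doubling constant `Cmu` and upper dimension `dim`. -/
structure SHT (X : Type*) [MeasurableSpace X] where
  d : X → X → ℝ
  μ : Measure X
  A0 : ℝ
  Cmu : ℝ
  dim : ℝ
  Cdim : ℝ
  one_le_A0 : 1 ≤ A0
  d_symm : ∀ x y, d x y = d y x
  d_nonneg : ∀ x y, 0 ≤ d x y
  d_eq_zero_iff : ∀ x y, d x y = 0 ↔ x = y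
  d_triangle : ∀ x y z, d x y ≤ A0 * (d x z + d z y)
  vol_pos : ∀ x r, 0 < r → 0 < μ {y | d x y < r}
  vol_lt_top : ∀ x r, 0 < r → μ {y | d x y < r} < ⊤
  doubling : ∀ x r, 0 < r →
    (μ {y | d x y < 2 * r}).toReal ≤ Cmu * (μ {y | d x y < r}).toReal
  dim_pos : 0 < dim
  upperDim : ∀ x r lam, 0 < r → 1 ≤ lam →
    (μ {y | d x y < lam * r}).toReal ≤ Cdim * lam ^ dim * (μ {y | d x y < r}).toReal

namespace SHT

variable {X : Type*} [MeasurableSpace X]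

/-- `V S x r` is `μ(B(x,r))` as a real number. -/
noncomputable def V (S : SHT X) (x : X) (r : ℝ) : ℝ := (S.μ {y | S.d x y < r}).toReal

/-- `Vd S x y` is `V(x,y) = μ(B(x,d(x,y)))`. -/
noncomputable def Vd (S : SHT X) (x y : X) : ℝ := S.V x (S.d x y)

end SHT

lemma rpow_mul_div_eq {c r s t β : ℝ} (hc : 0 ≤ c) (hr : 0 ≤ r) (hs : 0 < s) (ht : 0 < t) :
    (c * r / t) ^ β = c ^ β * (r / s) ^ β * (s / t) ^ β := by
  rw [← Real.mul_rpow hc (by positivity), ← Real.mul_rpow (by positivity) (by positivity)]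
  congr 1
  field_simp

lemma div_add_le_mul_div {r d c t : ℝ} (hr : 0 ≤ r) (hc : 0 < c) (ht : 0 < t)
    (hd : c⁻¹ * t ≤ d) : r / (r + d) ≤ c * r / t := by
  rw [inv_mul_le_iff₀ hc] at hd
  have hd0 : 0 < d := by nlinarith
  rw [div_le_div_iff₀ (by positivity) ht]
  nlinarith [mul_le_mul_of_nonneg_left hd hr, mul_nonneg hc.le (mul_nonneg hr hr)]

lemma inv_two_pow_rpow (k : ℕ) (α : ℝ) : ((2 : ℝ) ^ k)⁻¹ ^ α = ((2 : ℝ) ^ (-α)) ^ k := by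
  rw [← Real.rpow_natCast, ← Real.rpow_natCast, Real.inv_rpow (by positivity),
    ← Real.rpow_mul zero_le_two, ← Real.rpow_mul zero_le_two, neg_mul,
    Real.rpow_neg zero_le_two, mul_comm]

lemma two_rpow_neg_lt_one {α : ℝ} (hα : 0 < α) : (2 : ℝ) ^ (-α) < 1 :=
  Real.rpow_lt_one_of_one_lt_of_neg one_lt_two (neg_lt_zero.2 hα)

lemma integral_mul_sub_const_eq {α : Type*} [MeasurableSpace α] {μ : Measure α} {u v : α → ℝ}
    (hu : Integrable u μ) (huv : Integrable (fun x => u x * v x) μ) (hu0 : ∫ x, u x ∂μ = 0)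
    (c : ℝ) : ∫ x, u x * (v x - c) ∂μ = ∫ x, u x * v x ∂μ := by
  simp only [mul_sub]
  rw [integral_sub huv (hu.mul_const c), integral_mul_const, hu0, zero_mul, sub_zero]

namespace SHT

variable {X : Type*} [MeasurableSpace X] (S : SHT X)

lemma A0_pos : 0 < S.A0 := zero_lt_one.trans_le S.one_le_A0

lemma d_self (x : X) : S.d x x = 0 := (S.d_eq_zero_iff x x).2 rfl

lemma V_nonneg (x : X) (r : ℝ) : 0 ≤ S.V x r := ENNReal.toReal_nonneg

lemma V_pos (x : X) {r : ℝ} (hr : 0 < r) : 0 < S.V x r :=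
  ENNReal.toReal_pos (S.vol_pos x r hr).ne' (S.vol_lt_top x r hr).ne

lemma ofReal_V (x : X) {r : ℝ} (hr : 0 < r) :
    ENNReal.ofReal (S.V x r) = S.μ {y | S.d x y < r} :=
  ENNReal.ofReal_toReal (S.vol_lt_top x r hr).ne

lemma V_le_of_subset {x z : X} {a b : ℝ} (hb : 0 < b)
    (h : {y | S.d x y < a} ⊆ {y | S.d z y < b}) : S.V x a ≤ S.V z b :=
  ENNReal.toReal_mono (S.vol_lt_top z b hb).ne (measure_mono h)

lemma V_mono (x : X) {a b : ℝ} (hb : 0 < b) (hab : a ≤ b) : S.V x a ≤ S.V x b :=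
  S.V_le_of_subset hb fun _ hy => lt_of_lt_of_le hy hab

lemma V_le_of_A0_mul_le {x z : X} {a b : ℝ} (hb : 0 < b) (h : S.A0 * (S.d z x + a) ≤ b) :
    S.V x a ≤ S.V z b :=
  S.V_le_of_subset hb fun y (hy : S.d x y < a) =>
    (S.d_triangle z y x).trans_lt ((mul_lt_mul_of_pos_left (by linarith) S.A0_pos).trans_le h)

lemma V_two_mul_le (x : X) {r : ℝ} (hr : 0 < r) : S.V x (2 * r) ≤ max S.Cmu 1 * S.V x r :=
  (S.doubling x r hr).trans (mul_le_mul_of_nonneg_right (le_max_left _ _) (S.V_nonneg x r))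

lemma V_le_of_le_mul (z : X) {ρ R Λ : ℝ} (hρ : 0 < ρ) (h₁ : ρ ≤ R) (h₂ : R ≤ Λ * ρ) :
    S.V z R ≤ max S.Cdim 1 * Λ ^ S.dim * S.V z ρ := by
  have hratio : 1 ≤ R / ρ := (one_le_div hρ).2 h₁
  calc S.V z R = S.V z (R / ρ * ρ) := by rw [div_mul_cancel₀ _ hρ.ne']
    _ ≤ S.Cdim * (R / ρ) ^ S.dim * S.V z ρ := S.upperDim z ρ _ hρ hratio
    _ ≤ max S.Cdim 1 * Λ ^ S.dim * S.V z ρ := by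
      gcongr
      · exact S.V_nonneg z ρ
      · exact le_max_left _ _
      · exact S.dim_pos.le
      · exact (div_le_iff₀ hρ).2 h₂

lemma inv_V_add_Vd_le {x y : X} {a b : ℝ} (ha : 0 < a) (hb : 0 < b)
    (hab : b ≤ max a (S.d x y)) : (S.V x a + S.Vd x y)⁻¹ ≤ (S.V x b)⁻¹ := by
  apply inv_anti₀ (S.V_pos x hb)
  rcases le_max_iff.1 hab with h | h
  · exact (S.V_mono x ha h).trans (le_add_of_nonneg_right (S.V_nonneg _ _))
  · exact (S.V_mono x (hb.trans_le h) h).trans (le_add_of_nonneg_left (S.V_nonneg _ _))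

/-- Three balls, each inside `B(z, 2A₀(s + d(x₁,x₂)))`, the `4A₀²`-fold dilate of the ball
of radius `(s + d(x₁,x₂))/(2A₀)`. -/
noncomputable def volConst : ℝ := 3 * max S.Cdim 1 * (4 * S.A0 ^ 2) ^ S.dim

lemma volConst_pos : 0 < S.volConst := by
  have := S.A0_pos
  unfold volConst
  positivity

lemma V_add_V_add_Vd_le {x₁ x₂ z : X} {s : ℝ} (hs : 0 < s) (h₁ : S.d z x₁ ≤ S.d x₁ x₂)
    (h₂ : S.d z x₂ ≤ S.d x₁ x₂) :
    S.V x₁ s + S.V x₂ s + S.Vd x₁ x₂ ≤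
      S.volConst * S.V z ((2 * S.A0)⁻¹ * (s + S.d x₁ x₂)) := by
  set D := S.d x₁ x₂
  have hA := S.one_le_A0
  have hD := S.d_nonneg x₁ x₂
  have hR : 0 < 2 * S.A0 * (s + D) := by positivity
  have hT : 0 < (2 * S.A0)⁻¹ * (s + D) := by positivity
  have e₁ : S.V x₁ s ≤ S.V z (2 * S.A0 * (s + D)) := S.V_le_of_A0_mul_le hR (by nlinarith)
  have e₂ : S.V x₂ s ≤ S.V z (2 * S.A0 * (s + D)) := S.V_le_of_A0_mul_le hR (by nlinarith)
  have e₃ : S.Vd x₁ x₂ ≤ S.V z (2 * S.A0 * (s + D)) := S.V_le_of_A0_mul_le hR (by nlinarith)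
  have hscale := S.V_le_of_le_mul z (Λ := 4 * S.A0 ^ 2) hT
    (R := 2 * S.A0 * (s + D)) (by
      rw [inv_mul_le_iff₀ (by positivity)]
      nlinarith)
    (le_of_eq (by field_simp; ring))
  unfold volConst
  linarith

lemma inv_V_add_Vd_le_volConst_mul {x₁ x₂ z y : X} {s a : ℝ} (hs : 0 < s) (ha : 0 < a)
    (h₁ : S.d z x₁ ≤ S.d x₁ x₂) (h₂ : S.d z x₂ ≤ S.d x₁ x₂)
    (hT : (2 * S.A0)⁻¹ * (s + S.d x₁ x₂) ≤ max a (S.d z y)) :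
    (S.V z a + S.Vd z y)⁻¹ ≤ S.volConst * (S.V x₁ s + S.V x₂ s + S.Vd x₁ x₂)⁻¹ := by
  have hT0 : 0 < (2 * S.A0)⁻¹ * (s + S.d x₁ x₂) := by
    have := S.A0_pos; have := S.d_nonneg x₁ x₂; positivity
  have hVtot : 0 < S.V x₁ s + S.V x₂ s + S.Vd x₁ x₂ := by
    have := S.V_pos x₁ hs; have := S.V_nonneg x₂ s; have := S.V_nonneg x₁ (S.d x₁ x₂)
    unfold Vd; linarith
  refine (S.inv_V_add_Vd_le ha hT0 hT).trans ?_
  rw [← div_eq_mul_inv, le_div_iff₀ hVtot, inv_mul_le_iff₀ (S.V_pos z hT0)]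
  exact (S.V_add_V_add_Vd_le hs h₁ h₂).trans_eq (mul_comm _ _)

noncomputable def bump (x₀ : X) (ρ α : ℝ) (x : X) : ℝ :=
  (S.V x₀ ρ + S.Vd x₀ x)⁻¹ * (ρ / (ρ + S.d x₀ x)) ^ α

variable {x₀ : X} {ρ α : ℝ}

lemma bump_nonneg (hρ : 0 ≤ ρ) (x : X) : 0 ≤ S.bump x₀ ρ α x :=
  mul_nonneg (inv_nonneg.2 (add_nonneg (S.V_nonneg _ _) (S.V_nonneg _ _)))
    (Real.rpow_nonneg (div_nonneg hρ (add_nonneg hρ (S.d_nonneg _ _))) _)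

lemma bump_add (hρ : 0 < ρ) (β : ℝ) (x : X) :
    S.bump x₀ ρ (α + β) x = S.bump x₀ ρ α x * (ρ / (ρ + S.d x₀ x)) ^ β := by
  have := S.d_nonneg x₀ x
  rw [bump, bump, Real.rpow_add (by positivity), mul_assoc]

lemma bump_le_inv_V (hρ : 0 < ρ) (hα : 0 ≤ α) (x : X) : S.bump x₀ ρ α x ≤ (S.V x₀ ρ)⁻¹ := by
  have := S.d_nonneg x₀ x
  calc S.bump x₀ ρ α x ≤ (S.V x₀ ρ)⁻¹ * 1 := by
        apply mul_le_mul (inv_anti₀ (S.V_pos x₀ hρ) (le_add_of_nonneg_right (S.V_nonneg _ _)))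
          (Real.rpow_le_one (by positivity) ((div_le_one (by positivity)).2 (by linarith)) hα)
          (by positivity) (inv_nonneg.2 (S.V_nonneg _ _))
    _ = (S.V x₀ ρ)⁻¹ := mul_one _

lemma bump_le_of_two_pow_mul_le (hρ : 0 < ρ) (hα : 0 ≤ α) {k : ℕ} {x : X}
    (hk : 2 ^ k * ρ ≤ S.d x₀ x) :
    S.bump x₀ ρ α x ≤ ((2 : ℝ) ^ (-α)) ^ k / S.V x₀ (2 ^ k * ρ) := by
  have hk0 : 0 < (2 : ℝ) ^ k * ρ := by positivity
  have := S.d_nonneg x₀ x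
  have hratio : ρ / (ρ + S.d x₀ x) ≤ ((2 : ℝ) ^ k)⁻¹ := by
    rw [div_le_iff₀ (by linarith), inv_mul_eq_div, le_div_iff₀ (by positivity)]
    nlinarith
  rw [div_eq_inv_mul, ← inv_two_pow_rpow]
  apply mul_le_mul _ (Real.rpow_le_rpow (by positivity) hratio hα) (by positivity)
    (inv_nonneg.2 (S.V_nonneg _ _))
  exact inv_anti₀ (S.V_pos x₀ hk0)
    ((S.V_mono x₀ (hk0.trans_le hk) hk).trans (le_add_of_nonneg_left (S.V_nonneg _ _)))

lemma exists_bump_le (hρ : 0 < ρ) (hα : 0 ≤ α) (x : X) :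
    ∃ k : ℕ, S.d x₀ x < 2 ^ (k + 1) * ρ ∧
      S.bump x₀ ρ α x ≤ ((2 : ℝ) ^ (-α)) ^ k / S.V x₀ (2 ^ k * ρ) := by
  classical
  have hex : ∃ k : ℕ, S.d x₀ x < 2 ^ (k + 1) * ρ := by
    obtain ⟨n, hn⟩ := pow_unbounded_of_one_lt (S.d x₀ x / ρ) one_lt_two
    refine ⟨n, (div_lt_iff₀ hρ).1 (hn.trans_le ?_)⟩
    exact pow_le_pow_right₀ one_le_two n.le_succ
  refine ⟨Nat.find hex, Nat.find_spec hex, ?_⟩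
  cases h : Nat.find hex with
  | zero => simpa using S.bump_le_inv_V hρ hα x
  | succ j =>
    exact S.bump_le_of_two_pow_mul_le hρ hα (not_lt.1 (Nat.find_min hex (h ▸ j.lt_succ_self)))

noncomputable def bumpConst (α : ℝ) : ℝ := max S.Cmu 1 / (1 - 2 ^ (-α))

lemma bumpConst_pos (hα : 0 < α) : 0 < S.bumpConst α :=
  div_pos (by positivity) (sub_pos.2 (two_rpow_neg_lt_one hα))

lemma lintegral_bump_le (hρ : 0 < ρ) (hα : 0 < α) :
    ∫⁻ x, ENNReal.ofReal (S.bump x₀ ρ α x) ∂S.μ ≤ ENNReal.ofReal (S.bumpConst α) := by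
  set q : ℝ := 2 ^ (-α)
  have hq0 : 0 ≤ q := by positivity
  have hq1 : q < 1 := two_rpow_neg_lt_one hα
  -- `d` is not assumed measurable, so balls are replaced by measurable hulls of equal measure.
  set B : ℕ → Set X := fun k => toMeasurable S.μ {y | S.d x₀ y < 2 ^ (k + 1) * ρ}
  set t : ℕ → ℝ := fun k => q ^ k / S.V x₀ (2 ^ k * ρ)
  have hcover : ∀ x, ENNReal.ofReal (S.bump x₀ ρ α x) ≤
      ∑' k, (B k).indicator (fun _ => ENNReal.ofReal (t k)) x := by
    intro x
    obtain ⟨k, hxk, hk⟩ := S.exists_bump_le (x₀ := x₀) hρ hα.le x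
    calc ENNReal.ofReal (S.bump x₀ ρ α x)
        ≤ (B k).indicator (fun _ => ENNReal.ofReal (t k)) x := by
          rw [Set.indicator_of_mem (s := B k) (subset_toMeasurable _ _ hxk)]
          exact ENNReal.ofReal_le_ofReal hk
      _ ≤ _ := ENNReal.le_tsum k
  have hterm : ∀ k, ENNReal.ofReal (t k) * S.μ (B k) ≤
      ENNReal.ofReal (max S.Cmu 1) * ENNReal.ofReal q ^ k := by
    intro k
    have hk0 : 0 < (2 : ℝ) ^ k * ρ := by positivity
    have hV := S.V_pos x₀ hk0
    have hdbl := S.V_two_mul_le x₀ hk0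
    rw [← mul_assoc, ← pow_succ'] at hdbl
    rw [measure_toMeasurable, ← S.ofReal_V x₀ (by positivity), ← ENNReal.ofReal_mul (by positivity),
      ← ENNReal.ofReal_pow hq0, ← ENNReal.ofReal_mul (by positivity)]
    apply ENNReal.ofReal_le_ofReal
    calc t k * S.V x₀ (2 ^ (k + 1) * ρ) ≤ t k * (max S.Cmu 1 * S.V x₀ (2 ^ k * ρ)) := by
          gcongr
      _ = max S.Cmu 1 * q ^ k := by simp only [t]; field_simp
  calc ∫⁻ x, ENNReal.ofReal (S.bump x₀ ρ α x) ∂S.μ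
      ≤ ∫⁻ x, ∑' k, (B k).indicator (fun _ => ENNReal.ofReal (t k)) x ∂S.μ := lintegral_mono hcover
    _ = ∑' k, ENNReal.ofReal (t k) * S.μ (B k) := by
        rw [lintegral_tsum fun k =>
          (measurable_const.indicator (measurableSet_toMeasurable _ _)).aemeasurable]
        exact tsum_congr fun k => lintegral_indicator_const (measurableSet_toMeasurable _ _) _
    _ ≤ ∑' k, ENNReal.ofReal (max S.Cmu 1) * ENNReal.ofReal q ^ k := ENNReal.tsum_le_tsum hterm
    _ = ENNReal.ofReal (S.bumpConst α) := by
        rw [ENNReal.tsum_mul_left, ENNReal.tsum_geometric, ← ENNReal.ofReal_one,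
          ← ENNReal.ofReal_sub _ hq0, ← ENNReal.ofReal_inv_of_pos (by linarith),
          ← ENNReal.ofReal_mul (by positivity), bumpConst, div_eq_mul_inv]

lemma integral_abs_le_of_abs_le_mul_bump_add (hρ : 0 < ρ) (hα : 0 < α) {f g : X → ℝ}
    (hf : Integrable f S.μ) (hg : Integrable g S.μ) (hg0 : ∀ x, 0 ≤ g x) {K : ℝ} (hK : 0 ≤ K)
    (h : ∀ x, |f x| ≤ K * S.bump x₀ ρ α x + g x) :
    ∫ x, |f x| ∂S.μ ≤ K * S.bumpConst α + ∫ x, g x ∂S.μ := by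
  have hC := S.bumpConst_pos hα
  have hlint : ∫⁻ x, ENNReal.ofReal |f x| ∂S.μ ≤
      ENNReal.ofReal (K * S.bumpConst α + ∫ x, g x ∂S.μ) := calc
    ∫⁻ x, ENNReal.ofReal |f x| ∂S.μ
        ≤ ∫⁻ x, ENNReal.ofReal K * ENNReal.ofReal (S.bump x₀ ρ α x) + ENNReal.ofReal (g x) ∂S.μ :=
          lintegral_mono fun x => (ENNReal.ofReal_le_ofReal (h x)).trans <|
            (ENNReal.ofReal_add_le).trans_eq (by rw [ENNReal.ofReal_mul hK])
    _ = ENNReal.ofReal K * ∫⁻ x, ENNReal.ofReal (S.bump x₀ ρ α x) ∂S.μ +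
          ∫⁻ x, ENNReal.ofReal (g x) ∂S.μ := by
        -- `bump` need not be measurable; additivity of `∫⁻` only needs `g` to be.
        rw [lintegral_add_right' _ hg.aemeasurable.ennreal_ofReal,
          lintegral_const_mul' _ _ ENNReal.ofReal_ne_top]
    _ ≤ ENNReal.ofReal K * ENNReal.ofReal (S.bumpConst α) + ENNReal.ofReal (∫ x, g x ∂S.μ) := by
        rw [ofReal_integral_eq_lintegral_ofReal hg (Filter.Eventually.of_forall hg0)]
        gcongr
        exact S.lintegral_bump_le hρ hα
    _ = ENNReal.ofReal (K * S.bumpConst α + ∫ x, g x ∂S.μ) := by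
        rw [ENNReal.ofReal_add (by positivity) (integral_nonneg hg0), ENNReal.ofReal_mul hK]
  rw [integral_eq_lintegral_of_nonneg_ae (Filter.Eventually.of_forall fun x => abs_nonneg _)
    hf.abs.aestronglyMeasurable]
  exact ENNReal.toReal_le_of_le_ofReal (add_nonneg (by positivity) (integral_nonneg hg0)) hlint

lemma integral_abs_le_bumpConst (hρ : 0 < ρ) (hα : 0 < α) {f : X → ℝ} (hf : Integrable f S.μ)
    (h : ∀ x, |f x| ≤ S.bump x₀ ρ α x) : ∫ x, |f x| ∂S.μ ≤ S.bumpConst α := by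
  simpa using S.integral_abs_le_of_abs_le_mul_bump_add hρ hα hf (integrable_zero _ _ _)
    (fun _ => le_rfl) zero_le_one (by simpa using h)

lemma inv_two_A0_mul_add_le_max {a b : ℝ} (ha : 0 ≤ a) (hb : 0 ≤ b) :
    (2 * S.A0)⁻¹ * (a + b) ≤ max a b := by
  have := S.one_le_A0
  rw [inv_mul_le_iff₀ (by positivity)]
  rcases le_total a b with h | h
  · rw [max_eq_right h]; nlinarith
  · rw [max_eq_left h]; nlinarith

noncomputable def almostOrthBound (x₁ x₂ : X) (r s γ η : ℝ) : ℝ :=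
  (r / s) ^ η * (S.V x₁ s + S.V x₂ s + S.Vd x₁ x₂)⁻¹ * (s / (s + S.d x₁ x₂)) ^ γ

variable {γ η r s : ℝ} {x₁ x₂ : X}

lemma almostOrthBound_nonneg (hr : 0 ≤ r) (hs : 0 ≤ s) : 0 ≤ S.almostOrthBound x₁ x₂ r s γ η := by
  have := S.V_nonneg x₁ s; have := S.V_nonneg x₂ s; have := S.V_nonneg x₁ (S.d x₁ x₂)
  have := S.d_nonneg x₁ x₂
  unfold almostOrthBound Vd
  positivity

lemma rpow_mul_bump_le (hγ : 0 ≤ γ) (hη : 0 ≤ η) (hr : 0 < r) (hs : 0 < s) {e : ℝ}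
    (he0 : 0 ≤ e) (he : e ≤ 2 * S.A0 * r / (s + S.d x₁ x₂)) :
    e ^ η * S.bump x₂ s (γ + η) x₁ ≤
      S.volConst * (2 * S.A0) ^ (γ + η) * S.almostOrthBound x₁ x₂ r s γ η := by
  set D := S.d x₁ x₂
  have hD := S.d_nonneg x₁ x₂
  have hA := S.one_le_A0
  have hσ : 0 < s / (s + D) := by positivity
  have hσ1 : s / (s + D) ≤ 1 := (div_le_one (by positivity)).2 (by linarith)
  have hVinv : (S.V x₂ s + S.Vd x₂ x₁)⁻¹ ≤
      S.volConst * (S.V x₁ s + S.V x₂ s + S.Vd x₁ x₂)⁻¹ :=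
    S.inv_V_add_Vd_le_volConst_mul hs hs (by rw [S.d_symm]) (by rw [S.d_self]; exact hD)
      (by rw [S.d_symm x₂ x₁]; exact S.inv_two_A0_mul_add_le_max hs.le hD)
  have he' : e ^ η ≤ (2 * S.A0) ^ η * (r / s) ^ η * (s / (s + D)) ^ η :=
    (Real.rpow_le_rpow he0 he hη).trans_eq (rpow_mul_div_eq (by positivity) hr.le hs (by positivity))
  have hpow : (2 * S.A0) ^ η ≤ (2 * S.A0) ^ (γ + η) :=
    Real.rpow_le_rpow_of_exponent_le (by linarith) (by linarith)
  have hσpow : (s / (s + D)) ^ η * (s / (s + D)) ^ (γ + η) ≤ (s / (s + D)) ^ γ :=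
    (mul_le_of_le_one_left (by positivity) (Real.rpow_le_one hσ.le hσ1 hη)).trans
      (Real.rpow_le_rpow_of_exponent_ge hσ hσ1 (by linarith))
  have hW := S.bump_nonneg (x₀ := x₂) (α := γ + η) hs.le x₁
  unfold bump almostOrthBound at *
  rw [S.d_symm x₂ x₁] at hW ⊢
  calc e ^ η * ((S.V x₂ s + S.Vd x₂ x₁)⁻¹ * (s / (s + D)) ^ (γ + η))
      ≤ ((2 * S.A0) ^ η * (r / s) ^ η * (s / (s + D)) ^ η) *
          ((S.volConst * (S.V x₁ s + S.V x₂ s + S.Vd x₁ x₂)⁻¹) * (s / (s + D)) ^ (γ + η)) := by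
        gcongr
    _ = S.volConst * (2 * S.A0) ^ η * (r / s) ^ η * (S.V x₁ s + S.V x₂ s + S.Vd x₁ x₂)⁻¹ *
          ((s / (s + D)) ^ η * (s / (s + D)) ^ (γ + η)) := by ring
    _ ≤ S.volConst * (2 * S.A0) ^ (γ + η) * (r / s) ^ η * (S.V x₁ s + S.V x₂ s + S.Vd x₁ x₂)⁻¹ *
          (s / (s + D)) ^ γ := by
        have := S.volConst_pos
        have : 0 ≤ (S.V x₁ s + S.V x₂ s + S.Vd x₁ x₂)⁻¹ :=
          inv_nonneg.2 (add_nonneg (add_nonneg (S.V_nonneg _ _) (S.V_nonneg _ _)) (S.V_nonneg _ _))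
        gcongr
    _ = _ := by ring

lemma bump_le_of_le_d (hγ : 0 ≤ γ) (hη : 0 ≤ η) (hr : 0 < r) (hrs : r ≤ s) {x : X}
    (hx : (2 * S.A0)⁻¹ * (s + S.d x₁ x₂) ≤ S.d x₁ x) :
    S.bump x₁ r (γ + η) x ≤
      S.volConst * (2 * S.A0) ^ (γ + η) * S.almostOrthBound x₁ x₂ r s γ η := by
  set D := S.d x₁ x₂
  have hs : 0 < s := hr.trans_le hrs
  have hD := S.d_nonneg x₁ x₂
  have hA := S.A0_pos
  have hd := S.d_nonneg x₁ x
  have hσ : 0 < s / (s + D) := by positivity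
  have hσ1 : s / (s + D) ≤ 1 := (div_le_one (by positivity)).2 (by linarith)
  have hrs1 : r / s ≤ 1 := (div_le_one hs).2 hrs
  have hVinv : (S.V x₁ r + S.Vd x₁ x)⁻¹ ≤
      S.volConst * (S.V x₁ s + S.V x₂ s + S.Vd x₁ x₂)⁻¹ :=
    S.inv_V_add_Vd_le_volConst_mul hs hr (by rw [S.d_self]; exact hD) le_rfl
      (hx.trans (le_max_right _ _))
  have hratio : r / (r + S.d x₁ x) ≤ 2 * S.A0 * r / (s + D) :=
    div_add_le_mul_div hr.le (by positivity) (by positivity) hx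
  have hVtot : 0 ≤ (S.V x₁ s + S.V x₂ s + S.Vd x₁ x₂)⁻¹ :=
    inv_nonneg.2 (add_nonneg (add_nonneg (S.V_nonneg _ _) (S.V_nonneg _ _)) (S.V_nonneg _ _))
  have := S.volConst_pos
  calc S.bump x₁ r (γ + η) x
      ≤ (S.volConst * (S.V x₁ s + S.V x₂ s + S.Vd x₁ x₂)⁻¹) *
          (2 * S.A0 * r / (s + D)) ^ (γ + η) := by
        unfold bump
        gcongr
    _ = S.volConst * (S.V x₁ s + S.V x₂ s + S.Vd x₁ x₂)⁻¹ *
          ((2 * S.A0) ^ (γ + η) * (r / s) ^ (γ + η) * (s / (s + D)) ^ (γ + η)) := by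
        rw [rpow_mul_div_eq (by positivity) hr.le hs (by positivity)]
    _ ≤ S.volConst * (S.V x₁ s + S.V x₂ s + S.Vd x₁ x₂)⁻¹ *
          ((2 * S.A0) ^ (γ + η) * (r / s) ^ η * (s / (s + D)) ^ γ) := by
        have h₁ : (r / s) ^ (γ + η) ≤ (r / s) ^ η :=
          Real.rpow_le_rpow_of_exponent_ge (by positivity) hrs1 (by linarith)
        have h₂ : (s / (s + D)) ^ (γ + η) ≤ (s / (s + D)) ^ γ :=
          Real.rpow_le_rpow_of_exponent_ge hσ hσ1 (by linarith)
        exact mul_le_mul_of_nonneg_left (mul_le_mul (mul_le_mul_of_nonneg_left h₁ (by positivity))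
          h₂ (by positivity) (by positivity)) (by positivity)
    _ = _ := by unfold almostOrthBound; ring

lemma abs_mul_sub_le_of_holder (hγ : 0 ≤ γ) (hη : 0 ≤ η) (hr : 0 < r) (hs : 0 < s)
    {u v : X → ℝ} {x : X} (hu : |u x| ≤ S.bump x₁ r (γ + η) x)
    (hv : |v x₁ - v x| ≤ (S.d x₁ x / (s + S.d x₂ x₁)) ^ η * S.bump x₂ s (γ + η) x₁) :
    |u x * (v x - v x₁)| ≤
      S.volConst * (2 * S.A0) ^ (γ + η) * S.almostOrthBound x₁ x₂ r s γ η *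
        S.bump x₁ r γ x := by
  have hD := S.d_nonneg x₁ x₂
  have hd := S.d_nonneg x₁ x
  have hA := S.one_le_A0
  rw [S.d_symm x₂ x₁] at hv
  rw [S.bump_add hr] at hu
  have he : r / (r + S.d x₁ x) * (S.d x₁ x / (s + S.d x₁ x₂)) ≤
      2 * S.A0 * r / (s + S.d x₁ x₂) := by
    rw [div_mul_div_comm]
    calc r * S.d x₁ x / ((r + S.d x₁ x) * (s + S.d x₁ x₂))
        ≤ r / (s + S.d x₁ x₂) := by
          rw [div_le_div_iff₀ (by positivity) (by positivity)]
          nlinarith [mul_nonneg (mul_nonneg hr.le hr.le) (add_nonneg hs.le hD)]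
      _ ≤ 2 * S.A0 * r / (s + S.d x₁ x₂) :=
          (div_le_div_iff_of_pos_right (by positivity)).2 (by nlinarith)
  have hb := S.bump_nonneg (x₀ := x₁) (α := γ) hr.le x
  calc |u x * (v x - v x₁)| = |u x| * |v x₁ - v x| := by rw [abs_mul, abs_sub_comm]
    _ ≤ (S.bump x₁ r γ x * (r / (r + S.d x₁ x)) ^ η) *
          ((S.d x₁ x / (s + S.d x₁ x₂)) ^ η * S.bump x₂ s (γ + η) x₁) := by
        gcongr
    _ = (r / (r + S.d x₁ x) * (S.d x₁ x / (s + S.d x₁ x₂))) ^ η *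
          S.bump x₂ s (γ + η) x₁ * S.bump x₁ r γ x := by
        rw [Real.mul_rpow (by positivity) (by positivity)]
        ring
    _ ≤ _ := mul_le_mul_of_nonneg_right (S.rpow_mul_bump_le hγ hη hr hs (by positivity) he) hb

lemma abs_mul_sub_le_of_far (hγ : 0 ≤ γ) (hη : 0 ≤ η) (hr : 0 < r) (hrs : r ≤ s)
    {u v : X → ℝ} {x : X} (hx : (2 * S.A0)⁻¹ * (s + S.d x₁ x₂) ≤ S.d x₁ x)
    (hu : |u x| ≤ S.bump x₁ r (γ + η) x) (hv : |v x₁| ≤ S.bump x₂ s (γ + η) x₁) :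
    |u x * (v x - v x₁)| ≤
      S.volConst * (2 * S.A0) ^ (γ + η) * S.almostOrthBound x₁ x₂ r s γ η *
        (S.bump x₁ r γ x + |v x|) := by
  set K := S.volConst * (2 * S.A0) ^ (γ + η) * S.almostOrthBound x₁ x₂ r s γ η
  have hs : 0 < s := hr.trans_le hrs
  have hD := S.d_nonneg x₁ x₂
  have hd := S.d_nonneg x₁ x
  have hA := S.A0_pos
  have hratio : r / (r + S.d x₁ x) ≤ 2 * S.A0 * r / (s + S.d x₁ x₂) :=
    div_add_le_mul_div hr.le (by positivity) (by positivity) hx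
  have hfar : |u x| * |v x| ≤ K * |v x| :=
    mul_le_mul_of_nonneg_right (hu.trans (S.bump_le_of_le_d hγ hη hr hrs hx)) (abs_nonneg _)
  have hnear : |u x| * |v x₁| ≤ K * S.bump x₁ r γ x := by
    rw [S.bump_add hr] at hu
    have hb := S.bump_nonneg (x₀ := x₁) (α := γ) hr.le x
    calc |u x| * |v x₁|
        ≤ S.bump x₁ r γ x * (r / (r + S.d x₁ x)) ^ η * S.bump x₂ s (γ + η) x₁ := by gcongr
      _ = (r / (r + S.d x₁ x)) ^ η * S.bump x₂ s (γ + η) x₁ * S.bump x₁ r γ x := by ring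
      _ ≤ K * S.bump x₁ r γ x :=
          mul_le_mul_of_nonneg_right (S.rpow_mul_bump_le hγ hη hr hs (by positivity) hratio) hb
  calc |u x * (v x - v x₁)| ≤ |u x| * |v x| + |u x| * |v x₁| := by
        rw [abs_mul, ← mul_add]
        exact mul_le_mul_of_nonneg_left (abs_sub _ _) (abs_nonneg _)
    _ ≤ K * (S.bump x₁ r γ x + |v x|) := by linarith

lemma abs_mul_sub_le (hγ : 0 ≤ γ) (hη : 0 ≤ η) (hr : 0 < r) (hrs : r ≤ s) {u v : X → ℝ}
    (hu : ∀ x, |u x| ≤ S.bump x₁ r (γ + η) x) (hv : |v x₁| ≤ S.bump x₂ s (γ + η) x₁)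
    (hvH : ∀ x, S.d x₁ x ≤ (2 * S.A0)⁻¹ * (s + S.d x₂ x₁) →
      |v x₁ - v x| ≤ (S.d x₁ x / (s + S.d x₂ x₁)) ^ η * S.bump x₂ s (γ + η) x₁) (x : X) :
    |u x * (v x - v x₁)| ≤
      S.volConst * (2 * S.A0) ^ (γ + η) * S.almostOrthBound x₁ x₂ r s γ η *
        (S.bump x₁ r γ x + |v x|) := by
  rcases le_or_gt (S.d x₁ x) ((2 * S.A0)⁻¹ * (s + S.d x₂ x₁)) with hnear | hfar
  · have hK : 0 ≤ S.volConst * (2 * S.A0) ^ (γ + η) * S.almostOrthBound x₁ x₂ r s γ η :=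
      mul_nonneg (by have := S.volConst_pos; have := S.A0_pos; positivity)
        (S.almostOrthBound_nonneg hr.le (hr.le.trans hrs))
    have := mul_nonneg hK (abs_nonneg (v x))
    linarith [S.abs_mul_sub_le_of_holder hγ hη hr (hr.trans_le hrs) (hu x) (hvH x hnear)]
  · rw [S.d_symm x₂ x₁] at hfar
    exact S.abs_mul_sub_le_of_far hγ hη hr hrs hfar.le (hu x) hv

end SHT

/-- the almost-orthogonality estimate between a function `u`
with cancellation at scale `r` and a Hölder bump `v` at scale `s ≥ r`. -/
theorem statement11 {X : Type*} [MeasurableSpace X] (S : SHT X)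
    (γ η : ℝ) (hγ : 0 < γ) (hη : 0 < η) :
    ∃ C > (0:ℝ), ∀ (r s : ℝ) (x₁ x₂ : X) (u v : X → ℝ),
      0 < r → r ≤ s →
      Integrable u S.μ → Integrable v S.μ →
      (∫ x, u x ∂S.μ = 0) →
      (∀ x, |u x| ≤ (S.V x₁ r + S.Vd x₁ x)⁻¹ * (r / (r + S.d x₁ x)) ^ (γ + η)) →
      (∀ x, |v x| ≤ (S.V x₂ s + S.Vd x₂ x)⁻¹ * (s / (s + S.d x₂ x)) ^ (γ + η)) →
      (∀ x x', S.d x x' ≤ (2 * S.A0)⁻¹ * (s + S.d x₂ x) →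
        |v x - v x'| ≤ (S.d x x' / (s + S.d x₂ x)) ^ η *
          (S.V x₂ s + S.Vd x₂ x)⁻¹ * (s / (s + S.d x₂ x)) ^ (γ + η)) →
      |∫ x, u x * v x ∂S.μ| ≤
        C * (r / s) ^ η * (S.V x₁ s + S.V x₂ s + S.Vd x₁ x₂)⁻¹ *
          (s / (s + S.d x₁ x₂)) ^ γ := by
  have hA := S.A0_pos
  have hC₀ := S.volConst_pos
  have hCγ := S.bumpConst_pos hγ
  have hCγη := S.bumpConst_pos (add_pos hγ hη)
  refine ⟨S.volConst * (2 * S.A0) ^ (γ + η) * (S.bumpConst γ + S.bumpConst (γ + η)),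
    by positivity, ?_⟩
  intro r s x₁ x₂ u v hr hrs hu_int hv_int hu0 hu hv hvH
  have hs : 0 < s := hr.trans_le hrs
  set K := S.volConst * (2 * S.A0) ^ (γ + η) * S.almostOrthBound x₁ x₂ r s γ η
  have hK : 0 ≤ K := mul_nonneg (by positivity) (S.almostOrthBound_nonneg hr.le hs.le)
  have huv : Integrable (fun x => u x * v x) S.μ :=
    hu_int.mul_bdd hv_int.aestronglyMeasurable
      (Filter.Eventually.of_forall fun x => (hv x).trans (S.bump_le_inv_V hs (by positivity) x))
  have hpt (x : X) : |u x * (v x - v x₁)| ≤ K * S.bump x₁ r γ x + K * |v x| :=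
    (S.abs_mul_sub_le hγ.le hη.le hr hrs hu (hv x₁)
      (fun x h => (hvH x₁ x h).trans_eq (mul_assoc _ _ _)) x).trans_eq (mul_add _ _ _)
  calc |∫ x, u x * v x ∂S.μ| = |∫ x, u x * (v x - v x₁) ∂S.μ| := by
        rw [integral_mul_sub_const_eq hu_int huv hu0]
    _ ≤ ∫ x, |u x * (v x - v x₁)| ∂S.μ := abs_integral_le_integral_abs
    _ ≤ K * S.bumpConst γ + ∫ x, K * |v x| ∂S.μ :=
        S.integral_abs_le_of_abs_le_mul_bump_add hr hγ
          ((huv.sub (hu_int.mul_const (v x₁))).congr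
            (ae_of_all _ fun x => (mul_sub _ _ _).symm))
          (hv_int.abs.const_mul K) (fun x => mul_nonneg hK (abs_nonneg _)) hK hpt
    _ ≤ K * S.bumpConst γ + K * S.bumpConst (γ + η) := by
        rw [integral_const_mul]
        gcongr
        exact S.integral_abs_le_bumpConst hs (add_pos hγ hη) hv_int hv
    _ = _ := by unfold K SHT.almostOrthBound; ring
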